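/- Claim (clause history separation): let Π be a derivation sequence along an elimination ordering agreeing with a trunk-aligned tree decomposition T of (Φ,D), let i ∈ [n], let p be the parent of forget(v_i), and let C be a clause in some matrix at step i whose certifying sequence is D = (C₁,…,C_t = C). If C contains a variable outside T_{≤p} (the variables occurring in the subtree rooted at p), then no clause in D contains any variable of T_{<p} = T_{≤p} \ χ(p). -/
import Mathlib


noncomputable section
attribute [local instance] Classical.propDecidable

/-- A literal is a variable with a polarity; a clause is a finite set of literals. -/
abbrev Clause (V : Type) := Finset (V × Bool)

/-- A CNF matrix is a finite set of clauses. -/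
abbrev CNF (V : Type) := Finset (Clause V)

variable {V : Type}

/-- A clause is tautological if it contains some variable in both polarities. -/
def Tauto (C : Clause V) : Prop := ∃ v : V, (v, true) ∈ C ∧ (v, false) ∈ C

/-- A variable occurs in a clause. -/
def varIn (v : V) (C : Clause V) : Prop := ∃ b : Bool, (v, b) ∈ C

def clauseSat (α : V → Bool) (C : Clause V) : Prop := ∃ l ∈ C, α l.1 = l.2

def cnfSat (α : V → Bool) (φ : CNF V) : Prop := ∀ C ∈ φ, clauseSat α C

/-- Truth of the QBF with existential variables `E`, universal variables `U`,
dependency relation `D` and matrix `φ`: there is a winning existential strategy,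
i.e. a choice function for every existential variable that depends only on the
universal variables it depends on (w.r.t. `D`), winning against every universal
assignment. -/
def QBFTrue (E U : Finset V) (D : V → V → Prop) (φ : CNF V) : Prop :=
  ∃ τ : V → (V → Bool) → Bool,
    (∀ x ∈ E, ∀ β β' : V → Bool, (∀ u ∈ U, D u x → β u = β' u) → τ x β = τ x β') ∧
    ∀ β : V → Bool, cnfSat (fun w => if w ∈ E then τ w β else β w) φ

/-- The clauses of `φ` containing the literal `x`. -/
def posCl (φ : CNF V) (x : V) : CNF V := φ.filter (fun C => (x, true) ∈ C)

/-- The clauses of `φ` containing the literal `¬x`. -/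
def negCl (φ : CNF V) (x : V) : CNF V := φ.filter (fun C => (x, false) ∈ C)

/-- `R(φ,x)`: all non-tautological resolvents `(C₁ \ {x}) ∪ (C₂ \ {¬x})` with
`C₁ ∈ φ_x` and `C₂ ∈ φ_{¬x}`. -/
def resolvents (φ : CNF V) (x : V) : CNF V :=
  ((posCl φ x ×ˢ negCl φ x).image
    (fun p => p.1.erase (x, true) ∪ p.2.erase (x, false))).filter (fun C => ¬ Tauto C)

/-- Resolution over `x` in `φ`. -/
def res (φ : CNF V) (x : V) : CNF V := (φ \ (posCl φ x ∪ negCl φ x)) ∪ resolvents φ x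

/-- Reduction of `u` from `φ`: delete both literals of `u` from every clause. -/
def red (φ : CNF V) (u : V) : CNF V :=
  φ.image (fun C => (C.erase (u, true)).erase (u, false))

/-- Restrict `φ` by the assignment `δ` on the variable set `S`: remove clauses
satisfied on `S` and delete falsified literals over `S`. -/
def restrict (φ : CNF V) (S : Finset V) (δ : V → Bool) : CNF V :=
  (φ.filter (fun C => ¬ ∃ l ∈ C, l.1 ∈ S ∧ δ l.1 = l.2)).image
    (fun C => C.filter (fun l => l.1 ∉ S))

/-- The combined assignment `(β, τ)`. -/
def combined (E : Finset V) (τ : V → (V → Bool) → Bool) (β : V → Bool) : V → Bool :=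
  fun w => if w ∈ E then τ w β else β w

/-- An existential strategy is valid if each `τ x` for existential `x` depends only on
the universal variables that `x` depends on. -/
def strategyValid (E U : Finset V) (D : V → V → Prop) (τ : V → (V → Bool) → Bool) : Prop :=
  ∀ x ∈ E, ∀ β β' : V → Bool, (∀ w ∈ U, D w x → β w = β' w) → τ x β = τ x β'

/-- Primal-graph adjacency: two distinct variables co-occur in some clause of `φ`. -/
def primalAdj (φ : CNF V) (a b : V) : Prop :=
  a ≠ b ∧ ∃ C ∈ φ, varIn a C ∧ varIn b C

/-- `Anc parent t s`: `s` is a (weak) ancestor of `t` in the rooted tree given by `parent`. -/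
def Anc {ι : Type} (parent : ι → ι) (t s : ι) : Prop := ∃ k : ℕ, parent^[k] t = s

/-- A (rooted) tree decomposition of a graph `G`, presented via a parent function on the
nodes, bags, and for each vertex the unique highest node `forget v` whose bag contains `v`.
The bags containing a vertex form a subtree rooted at `forget v`, every edge is covered
by some bag, and (as in nice tree decompositions) distinct variables are forgotten at
distinct nodes. -/
structure TreeDecomp (ι V : Type) (G : SimpleGraph V) where
  parent : ι → ι
  root : ι
  parent_root : parent root = root
  reaches_root : ∀ t, Anc parent t root
  bag : ι → Finset V
  forget : V → ι
  forget_mem : ∀ v, v ∈ bag (forget v)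
  forget_top : ∀ v t, v ∈ bag t → Anc parent t (forget v)
  bag_subtree : ∀ v t s, v ∈ bag t → Anc parent t s → Anc parent s (forget v) → v ∈ bag s
  forget_inj : Function.Injective forget
  edge_cover : ∀ a b, G.Adj a b → ∃ t, a ∈ bag t ∧ b ∈ bag t

/-- Trunk-alignment: for every variable `u`, either (P1) no variable depending on `u`
occurs in the bag where `u` is forgotten, or (P2) `u` is forgotten on the trunk and
every variable that `u` depends on occurs in the subtree rooted at `forget u`. -/
def TrunkAligned {ι V : Type} {G : SimpleGraph V} (T : TreeDecomp ι V G)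
    (D : V → V → Prop) (Tr : Set ι) : Prop :=
  ∀ u : V,
    (∀ v : V, D u v → v ≠ u → v ∉ T.bag (T.forget u)) ∨
    (T.forget u ∈ Tr ∧ ∀ v : V, D v u → ∃ t, Anc T.parent t (T.forget u) ∧ v ∈ T.bag t)

/-- `T_{≤ p}`: the variables occurring in some bag of the subtree rooted at `p`. -/
def belowVars {ι V : Type} {G : SimpleGraph V} (T : TreeDecomp ι V G) (p : ι) : Set V :=
  { w | ∃ s, Anc T.parent s p ∧ w ∈ T.bag s }

/-- Strategy extension of a set `π` of matrices up to the dependency-closed variable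
set `S`: for each choice of one partial existential strategy per matrix, collect all
matrices obtained by restricting a matrix of `π` with the combined assignment of the
chosen strategy against some universal assignment. -/
def strext {V : Type} (E U : Finset V) (D : V → V → Prop) (S : Finset V)
    (π : Set (CNF V)) : Set (Set (CNF V)) :=
  { π' | ∃ τ : CNF V → V → (V → Bool) → Bool,
      (∀ ψ ∈ π, strategyValid E U D (τ ψ)) ∧
      π' = { ψ' | ∃ ψ ∈ π, ∃ β : V → Bool, ψ' = restrict ψ S (combined E (τ ψ) β) } }

/-- A derivation sequence for the QBF with matrix `φ`, existential/universal variables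
`E`/`U` and dependency poset `D`, along an elimination ordering `v₀, …, v_{m-1}` that
agrees with a trunk-aligned tree decomposition `T` of the primal graph `G` of `φ`.
`F i` is the family of sets of matrices after `i` elimination steps and `Rem i` is the
set of variables remaining in the prefix; the steps follow rules R1–R4. -/
structure DerivSeq (V ι : Type) (G : SimpleGraph V) where
  T : TreeDecomp ι V G
  E : Finset V
  U : Finset V
  EU_disj : Disjoint E U
  D : V → V → Prop
  Dposet : IsPartialOrder V D
  φ : CNF V
  φ_nt : ∀ C ∈ φ, ¬ Tauto C
  φ_vars : ∀ C ∈ φ, ∀ l ∈ C, l.1 ∈ E ∪ U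
  primal : ∀ a b, G.Adj a b ↔ primalAdj φ a b
  m : ℕ
  v : Fin m → V
  v_inj : Function.Injective v
  v_covers : ∀ w ∈ E ∪ U, ∃ i, v i = w
  agrees : ∀ i j : Fin m,
    Anc T.parent (T.forget (v i)) (T.forget (v j)) → T.forget (v i) ≠ T.forget (v j) →
      i < j
  F : ℕ → Set (Set (CNF V))
  Rem : ℕ → Finset V
  F0 : F 0 = {{φ}}
  Rem0 : Rem 0 = E ∪ U
  stepR1 : ∀ i : Fin m, v i ∉ Rem (i : ℕ) →
    F ((i : ℕ) + 1) = F (i : ℕ) ∧ Rem ((i : ℕ) + 1) = Rem (i : ℕ)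
  stepR2 : ∀ i : Fin m, v i ∈ Rem (i : ℕ) → v i ∈ E →
    (∀ w ∈ Rem (i : ℕ), D (v i) w → w ≠ v i → w ∉ T.bag (T.forget (v i))) →
    F ((i : ℕ) + 1) = { π' | ∃ π ∈ F (i : ℕ), π' = (fun ψ => res ψ (v i)) '' π } ∧
    Rem ((i : ℕ) + 1) = (Rem (i : ℕ)).erase (v i)
  stepR3 : ∀ i : Fin m, v i ∈ Rem (i : ℕ) → v i ∈ U →
    (∀ w ∈ Rem (i : ℕ), D (v i) w → w ≠ v i → w ∉ T.bag (T.forget (v i))) →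
    F ((i : ℕ) + 1) = { π' | ∃ π ∈ F (i : ℕ), π' = (fun ψ => red ψ (v i)) '' π } ∧
    Rem ((i : ℕ) + 1) = (Rem (i : ℕ)).erase (v i)
  stepR4 : ∀ i : Fin m, v i ∈ Rem (i : ℕ) →
    ¬ (∀ w ∈ Rem (i : ℕ), D (v i) w → w ≠ v i → w ∉ T.bag (T.forget (v i))) →
    (F ((i : ℕ) + 1) =
      ⋃ π ∈ F (i : ℕ), strext E U D ((Rem (i : ℕ)).filter (fun w => D w (v i))) π) ∧
    Rem ((i : ℕ) + 1) = (Rem (i : ℕ)).filter (fun w => ¬ D w (v i))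

/-- A certifying sequence of a clause `C` in the partial derivation sequence up to step
`i`: a sequence of clauses ending in `C` such that each member either is an original
clause of `Δ.φ`, or is obtained from earlier members by a resolution step on an already
eliminated pivot `v j` (`j < i`), by a reduction step of an already eliminated `v j`,
or by restricting with a partial assignment on the dependency-closed set used at an
earlier strategy-extension step; moreover (minimality) every non-final member is used
to derive some later member. -/
structure CertSeq {V ι : Type} {G : SimpleGraph V} (Δ : DerivSeq V ι G) (i : ℕ)
    (C : Clause V) where
  t : ℕ
  t_pos : 0 < t
  Cs : ℕ → Clause V
  last : Cs (t - 1) = C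
  justified : ∀ s < t,
    Cs s ∈ Δ.φ ∨
    (∃ j : Fin Δ.m, (j : ℕ) < i ∧ ∃ a < s, ∃ b < s,
        Cs s ∈ resolvents {Cs a, Cs b} (Δ.v j)) ∨
    (∃ j : Fin Δ.m, (j : ℕ) < i ∧ ∃ a < s,
        Cs s = ((Cs a).erase (Δ.v j, true)).erase (Δ.v j, false)) ∨
    (∃ j : Fin Δ.m, (j : ℕ) < i ∧ ∃ a < s, ∃ δ : V → Bool,
        ({Cs s} : CNF V) =
          restrict {Cs a} ((Δ.Rem (j : ℕ)).filter (fun w => Δ.D w (Δ.v j))) δ)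
  minimal : ∀ s, s + 1 < t → ∃ s', s < s' ∧ s' < t ∧
    ((∃ j : Fin Δ.m, (j : ℕ) < i ∧ ∃ b < s', Cs s' ∈ resolvents {Cs s, Cs b} (Δ.v j)) ∨
     (∃ j : Fin Δ.m, (j : ℕ) < i ∧
        Cs s' = ((Cs s).erase (Δ.v j, true)).erase (Δ.v j, false)) ∨
     (∃ j : Fin Δ.m, (j : ℕ) < i ∧ ∃ δ : V → Bool,
        ({Cs s'} : CNF V) =
          restrict {Cs s} ((Δ.Rem (j : ℕ)).filter (fun w => Δ.D w (Δ.v j))) δ))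

/-! ### Auxiliary lemmas -/

lemma anc_trans' {ι : Type} {parent : ι → ι} {a b c : ι}
    (h1 : Anc parent a b) (h2 : Anc parent b c) : Anc parent a c := by
  obtain ⟨k, hk⟩ := h1; obtain ⟨l, hl⟩ := h2
  exact ⟨l + k, by rw [Function.iterate_add_apply, hk, hl]⟩

lemma anc_total' {ι : Type} {parent : ι → ι} {a b c : ι}
    (h1 : Anc parent a b) (h2 : Anc parent a c) : Anc parent b c ∨ Anc parent c b := by
  obtain ⟨k, hk⟩ := h1; obtain ⟨l, hl⟩ := h2
  rcases le_total k l with h | h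
  · exact Or.inl ⟨l - k, by rw [← hk, ← Function.iterate_add_apply, Nat.sub_add_cancel h, hl]⟩
  · exact Or.inr ⟨k - l, by rw [← hl, ← Function.iterate_add_apply, Nat.sub_add_cancel h, hk]⟩

lemma anc_antisymm' {ι V : Type} {G : SimpleGraph V} (T : TreeDecomp ι V G) {a b : ι}
    (h1 : Anc T.parent a b) (h2 : Anc T.parent b a) : a = b := by
  obtain ⟨k, hk⟩ := h1; obtain ⟨l, hl⟩ := h2
  rcases Nat.eq_zero_or_pos (l + k) with h0 | hpos
  · have hk0 : k = 0 := by omega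
    rw [hk0] at hk; exact hk
  · have hcyc : T.parent^[l + k] a = a := by
      rw [Function.iterate_add_apply, hk, hl]
    have hiter : ∀ q, T.parent^[q * (l + k)] a = a := by
      intro q
      induction q with
      | zero => simp
      | succ q ih =>
        rw [Nat.succ_mul, Function.iterate_add_apply, hcyc, ih]
    obtain ⟨n, hn⟩ := T.reaches_root a
    have haroot : a = T.root := by
      have hq := hiter (n + 1)
      have hge : n ≤ (n + 1) * (l + k) := by nlinarith
      calc a = T.parent^[(n + 1) * (l + k)] a := (hq).symm
        _ = T.parent^[(n + 1) * (l + k) - n] (T.parent^[n] a) := by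
            rw [← Function.iterate_add_apply, Nat.sub_add_cancel hge]
        _ = T.root := by rw [hn]; exact Function.iterate_fixed T.parent_root _
    have hbroot : b = T.root := by
      rw [← hk, haroot]
      exact Function.iterate_fixed T.parent_root _
    rw [haroot, hbroot]

lemma varIn_mono {V : Type} {K K' : Clause V} (h : K' ⊆ K) {w : V}
    (hw : varIn w K') : varIn w K := by
  obtain ⟨b, hb⟩ := hw; exact ⟨b, h hb⟩

lemma tauto_mono {V : Type} {K K' : Clause V} (h : K' ⊆ K) (ht : Tauto K') : Tauto K := by
  obtain ⟨v, h1, h2⟩ := ht; exact ⟨v, h h1, h h2⟩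

lemma restrict_singleton_sub {V : Type} {K K' : Clause V} {S : Finset V} {δ : V → Bool}
    (h : ({K'} : CNF V) = restrict {K} S δ) : K' ⊆ K := by
  classical
  rw [restrict, Finset.filter_singleton] at h
  split_ifs at h with hc
  · simp at h
  · rw [Finset.image_singleton, Finset.singleton_inj] at h
    rw [h]
    exact Finset.filter_subset _ _

lemma mem_resolvents_pair {V : Type} {A B R : Clause V} {x : V}
    (h : R ∈ resolvents {A, B} x) :
    ¬ Tauto R ∧ ∃ C₁ C₂ : Clause V, (C₁ = A ∨ C₁ = B) ∧ (C₂ = A ∨ C₂ = B) ∧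
      (x, true) ∈ C₁ ∧ (x, false) ∈ C₂ ∧
      R = C₁.erase (x, true) ∪ C₂.erase (x, false) := by
  classical
  rw [resolvents, Finset.mem_filter] at h
  obtain ⟨hmem, hnt⟩ := h
  rw [Finset.mem_image] at hmem
  obtain ⟨q, hq, hR⟩ := hmem
  rw [Finset.mem_product] at hq
  obtain ⟨h1, h2⟩ := hq
  rw [posCl, Finset.mem_filter, Finset.mem_insert, Finset.mem_singleton] at h1
  rw [negCl, Finset.mem_filter, Finset.mem_insert, Finset.mem_singleton] at h2
  exact ⟨hnt, q.1, q.2, h1.1, h2.1, h1.2, h2.2, hR.symm⟩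

/-- All variables of a clause occur in `T_{≤ p}`. -/
def LowCl {ι V : Type} {G : SimpleGraph V} (T : TreeDecomp ι V G) (p : ι)
    (K : Clause V) : Prop :=
  ∀ w, varIn w K → w ∈ belowVars T p

/-- All variables of a clause lying in `T_{≤ p}` lie in the bag of `p`
(i.e. the clause contains no variable of `T_{< p}`). -/
def GoodCl {ι V : Type} {G : SimpleGraph V} (T : TreeDecomp ι V G) (p : ι)
    (K : Clause V) : Prop :=
  ∀ w, varIn w K → w ∈ belowVars T p → w ∈ T.bag p

/-- clause history separation: let `Δ` be a derivation sequence
along an elimination ordering agreeing with a trunk-aligned tree decomposition, let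
`i` be a step, `p` the parent of `forget(v_i)`, and `C` a clause of a matrix occurring
at step `i` (i.e. in `F^{(i)}`, after eliminating `v_i`) with certifying sequence
`cs` produced by the partial derivation sequence up to step `i`. If `C` contains a
variable outside `T_{≤ p}`, then no clause of the certifying sequence contains a
variable of `T_{< p} = T_{≤ p} \ χ(p)`. -/
theorem stmt17 {V ι : Type} {G : SimpleGraph V} (Δ : DerivSeq V ι G)
    (i : Fin Δ.m) (π : Set (CNF V)) (hπ : π ∈ Δ.F ((i : ℕ) + 1))
    (ψ : CNF V) (hψ : ψ ∈ π) (C : Clause V) (hC : C ∈ ψ)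
    (cs : CertSeq Δ ((i : ℕ) + 1) C)
    (p : ι) (hp : p = Δ.T.parent (Δ.T.forget (Δ.v i)))
    (hout : ∃ b, varIn b C ∧ b ∉ belowVars Δ.T p) :
    ∀ s < cs.t, ∀ w : V, varIn w (cs.Cs s) →
      w ∈ belowVars Δ.T p → w ∈ Δ.T.bag p := by
  classical
  obtain ⟨b0, hb0C, hb0out⟩ := hout
  have hAncp : Anc Δ.T.parent (Δ.T.forget (Δ.v i)) p :=
    ⟨1, by rw [Function.iterate_one]; exact hp.symm⟩
  -- Claim B: no variable of the bag of `p` has been eliminated by step `i`.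
  have claimB : ∀ j : Fin Δ.m, (j : ℕ) < (i : ℕ) + 1 → Δ.v j ∉ Δ.T.bag p := by
    intro j hj hmem
    have h1 : Anc Δ.T.parent p (Δ.T.forget (Δ.v j)) := Δ.T.forget_top _ _ hmem
    by_cases heq : Δ.T.forget (Δ.v i) = Δ.T.forget (Δ.v j)
    · rw [← heq] at h1
      have hpe : p = Δ.T.forget (Δ.v i) := anc_antisymm' Δ.T h1 hAncp
      have hfix : Δ.T.parent p = p := by
        conv_lhs => rw [hpe]
        exact hp.symm
      have hroot : p = Δ.T.root := by
        obtain ⟨n, hn⟩ := Δ.T.reaches_root p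
        rw [Function.iterate_fixed hfix n] at hn
        exact hn
      refine hb0out ⟨Δ.T.forget b0, ?_, Δ.T.forget_mem b0⟩
      rw [hroot]; exact Δ.T.reaches_root _
    · have := Δ.agrees i j (anc_trans' hAncp h1) heq
      omega
  -- Claim A: original clauses with a variable outside `T_{≤ p}` contain no `T_{< p}` variable.
  have claimA : ∀ K ∈ Δ.φ, (∃ c, varIn c K ∧ c ∉ belowVars Δ.T p) → GoodCl Δ.T p K := by
    rintro K hK ⟨c, hcK, hcout⟩ w hwK hwb
    by_contra hwp
    have hne : w ≠ c := by rintro rfl; exact hcout hwb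
    have hadj : G.Adj w c := (Δ.primal w c).mpr ⟨hne, K, hK, hwK, hcK⟩
    obtain ⟨n, hwn, hcn⟩ := Δ.T.edge_cover w c hadj
    have hnp : ¬ Anc Δ.T.parent n p := fun h => hcout ⟨n, h, hcn⟩
    obtain ⟨s0, hs0p, hws0⟩ := hwb
    rcases anc_total' hs0p (Δ.T.forget_top w s0 hws0) with hpf | hfp
    · exact hwp (Δ.T.bag_subtree w s0 p hws0 hs0p hpf)
    · exact hnp (anc_trans' (Δ.T.forget_top w n hwn) hfp)
  -- Being non-tautological and (low or good) is inherited by subclauses.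
  have subset_step : ∀ {K K' : Clause V}, K' ⊆ K →
      (¬ Tauto K ∧ (LowCl Δ.T p K ∨ GoodCl Δ.T p K)) →
      (¬ Tauto K' ∧ (LowCl Δ.T p K' ∨ GoodCl Δ.T p K')) := by
    intro K K' hsub hK
    refine ⟨fun ht => hK.1 (tauto_mono hsub ht), ?_⟩
    exact hK.2.imp (fun l w hw => l w (varIn_mono hsub hw))
      (fun g w hw => g w (varIn_mono hsub hw))
  -- Main invariant: every clause of the certifying sequence is non-tautological
  -- and is either low (all variables in `T_{≤ p}`) or good (no `T_{< p}` variable).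
  have NTC : ∀ s, s < cs.t →
      ¬ Tauto (cs.Cs s) ∧ (LowCl Δ.T p (cs.Cs s) ∨ GoodCl Δ.T p (cs.Cs s)) := by
    intro s
    induction s using Nat.strong_induction_on with
    | _ s IH =>
      intro hs
      rcases cs.justified s hs with horig | ⟨j, hj, a, ha, b, hb, hmem⟩ |
        ⟨j, hj, a, ha, heq⟩ | ⟨j, hj, a, ha, δ, heq⟩
      · refine ⟨Δ.φ_nt _ horig, ?_⟩
        by_cases hex : ∃ c, varIn c (cs.Cs s) ∧ c ∉ belowVars Δ.T p
        · exact Or.inr (claimA _ horig hex)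
        · push_neg at hex
          exact Or.inl (fun w hw => hex w hw)
      · obtain ⟨hnt, C₁, C₂, h1, h2, hx1, hx2, hEq⟩ := mem_resolvents_pair hmem
        refine ⟨hnt, ?_⟩
        have hxp : Δ.v j ∉ Δ.T.bag p := claimB j hj
        have stat : ∀ K : Clause V, K = cs.Cs a ∨ K = cs.Cs b →
            LowCl Δ.T p K ∨ GoodCl Δ.T p K := by
          rintro K (rfl | rfl)
          · exact (IH a ha (ha.trans hs)).2
          · exact (IH b hb (hb.trans hs)).2
        have hvar : ∀ w, varIn w (cs.Cs s) → varIn w C₁ ∨ varIn w C₂ := by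
          rintro w ⟨bb, hwbb⟩
          rw [hEq, Finset.mem_union] at hwbb
          exact hwbb.imp (fun h => ⟨bb, Finset.mem_of_mem_erase h⟩)
            (fun h => ⟨bb, Finset.mem_of_mem_erase h⟩)
        by_cases hxb : Δ.v j ∈ belowVars Δ.T p
        · left
          have l1 : LowCl Δ.T p C₁ :=
            (stat C₁ h1).resolve_right (fun g => hxp (g _ ⟨true, hx1⟩ hxb))
          have l2 : LowCl Δ.T p C₂ :=
            (stat C₂ h2).resolve_right (fun g => hxp (g _ ⟨false, hx2⟩ hxb))
          intro w hw
          rcases hvar w hw with h | h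
          · exact l1 w h
          · exact l2 w h
        · right
          have g1 : GoodCl Δ.T p C₁ :=
            (stat C₁ h1).resolve_left (fun l => hxb (l _ ⟨true, hx1⟩))
          have g2 : GoodCl Δ.T p C₂ :=
            (stat C₂ h2).resolve_left (fun l => hxb (l _ ⟨false, hx2⟩))
          intro w hw hwb
          rcases hvar w hw with h | h
          · exact g1 w h hwb
          · exact g2 w h hwb
      · have hsub : cs.Cs s ⊆ cs.Cs a := by
          rw [heq]
          exact (Finset.erase_subset _ _).trans (Finset.erase_subset _ _)
        exact subset_step hsub (IH a ha (ha.trans hs))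
      · exact subset_step (restrict_singleton_sub heq) (IH a ha (ha.trans hs))
  -- Forward propagation: lowness propagates to the last clause of the sequence.
  have fwd : ∀ d s, s < cs.t → cs.t - 1 - s ≤ d →
      LowCl Δ.T p (cs.Cs s) → LowCl Δ.T p (cs.Cs (cs.t - 1)) := by
    intro d
    induction d with
    | zero =>
      intro s hs hd hl
      have hse : s = cs.t - 1 := by omega
      rwa [hse] at hl
    | succ d IHd =>
      intro s hs hd hl
      by_cases hse : s = cs.t - 1
      · rwa [hse] at hl
      · have hs1 : s + 1 < cs.t := by omega
        obtain ⟨s', hss', hst, hcase⟩ := cs.minimal s hs1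
        have hlow' : LowCl Δ.T p (cs.Cs s') := by
          rcases hcase with ⟨j, hj, b, hb, hmem⟩ | ⟨j, hj, heq⟩ | ⟨j, hj, δ, heq⟩
          · obtain ⟨hnt, C₁, C₂, h1, h2, hx1, hx2, hEq⟩ := mem_resolvents_pair hmem
            have hne12 : C₁ ≠ C₂ := by
              intro h
              have ht : Tauto C₁ := ⟨Δ.v j, hx1, h ▸ hx2⟩
              rcases h1 with rfl | rfl
              · exact (NTC s hs).1 ht
              · exact (NTC b (hb.trans hst)).1 ht
            have hxs : varIn (Δ.v j) (cs.Cs s) :=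
              h1.elim (fun h1' => ⟨true, h1' ▸ hx1⟩)
                (fun h1' => h2.elim (fun h2' => ⟨false, h2' ▸ hx2⟩)
                  (fun h2' => absurd (h1'.trans h2'.symm) hne12))
            have hxb : Δ.v j ∈ belowVars Δ.T p := hl _ hxs
            have hxp : Δ.v j ∉ Δ.T.bag p := claimB j hj
            have l1 : LowCl Δ.T p C₁ := by
              rcases h1 with rfl | rfl
              · exact hl
              · exact ((NTC b (hb.trans hst)).2).resolve_right
                  (fun g => hxp (g _ ⟨true, hx1⟩ hxb))
            have l2 : LowCl Δ.T p C₂ := by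
              rcases h2 with rfl | rfl
              · exact hl
              · exact ((NTC b (hb.trans hst)).2).resolve_right
                  (fun g => hxp (g _ ⟨false, hx2⟩ hxb))
            rintro w ⟨bb, hwbb⟩
            rw [hEq, Finset.mem_union] at hwbb
            rcases hwbb with h | h
            · exact l1 w ⟨bb, Finset.mem_of_mem_erase h⟩
            · exact l2 w ⟨bb, Finset.mem_of_mem_erase h⟩
          · intro w hw
            rw [heq] at hw
            exact hl w (varIn_mono
              ((Finset.erase_subset _ _).trans (Finset.erase_subset _ _)) hw)
          · intro w hw
            exact hl w (varIn_mono (restrict_singleton_sub heq) hw)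
        exact IHd s' hst (by omega) hlow'
  -- Conclusion.
  intro s hs w hw hwb
  by_contra hwp
  have hlow : LowCl Δ.T p (cs.Cs s) :=
    ((NTC s hs).2).resolve_right (fun g => hwp (g w hw hwb))
  have hlC := fwd cs.t s hs (by omega) hlow
  rw [cs.last] at hlC
  exact hb0out (hlC b0 hb0C)
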